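/- For |q| < 1, the double sum ∑_{n₁,n₂≥0} q^{n₁+n₂+n₁n₂} / ((q;q)_{n₁} (q;q)_{n₂}²) equals 1/(q;q)_∞². -/

import Mathlib

/-- The finite q-Pochhammer symbol `(q;q)_n`. -/
noncomputable def qPoch (q : ℂ) (n : ℕ) : ℂ := ∏ i ∈ Finset.range n, (1 - q ^ (i + 1))

/-- The infinite q-Pochhammer symbol `(q;q)_∞`. -/
noncomputable def qPochInf (q : ℂ) : ℂ := ∏' i : ℕ, (1 - q ^ (i + 1))

/-- The infinite q-Pochhammer symbol `(a;q)_∞ = ∏_{i≥0} (1 - a q^i)`. -/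
noncomputable def pochInf (a q : ℂ) : ℂ := ∏' i : ℕ, (1 - a * q ^ i)

/-!
Summing over `n₁` first, the inner series is Euler's `q`-exponential
`e_q(z) = ∑ zⁿ / (q;q)ₙ` at `z = q^(n₂+1)`. Iterating `e_q(z) - e_q(zq) = z e_q(z)` gives
`e_q(z) (z;q)_N = e_q(z q^N)`, and letting `N → ∞` (using continuity of `e_q` at `0`) yields
`e_q(z) = 1 / (z;q)_∞`. As `(q;q)_{n₂} (q^(n₂+1);q)_∞ = (q;q)_∞`, the inner sum is
`q^n₂ / ((q;q)_{n₂} (q;q)_∞)`, and the outer sum is `e_q(q) / (q;q)_∞ = 1 / (q;q)_∞²`.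
Absolute convergence, which justifies the interchange, comes from `1 / (q;q)ₙ` being bounded:
it converges to `1 / (q;q)_∞ ≠ 0`.
-/

open Filter Topology Finset

noncomputable def qExp (q z : ℂ) : ℂ := ∑' n : ℕ, z ^ n / qPoch q n

section

variable {q z : ℂ}

lemma qPoch_zero (q : ℂ) : qPoch q 0 = 1 := by simp [qPoch]

lemma qPoch_succ (q : ℂ) (n : ℕ) : qPoch q (n + 1) = qPoch q n * (1 - q ^ (n + 1)) :=
  prod_range_succ _ _

lemma qPoch_eq_prod_range (q : ℂ) (n : ℕ) : qPoch q n = ∏ i ∈ range n, (1 - q * q ^ i) := by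
  simp only [qPoch, pow_succ']

lemma qPochInf_eq_pochInf (q : ℂ) : qPochInf q = pochInf q q := by
  simp only [qPochInf, pochInf, pow_succ']

lemma one_sub_ne_zero_of_norm_lt_one {R : Type*} [SeminormedRing R] [NormOneClass R] {w : R}
    (hw : ‖w‖ < 1) : 1 - w ≠ 0 := by
  rw [sub_ne_zero]
  rintro rfl
  simp at hw

lemma norm_mul_pow_le (hq : ‖q‖ ≤ 1) (n : ℕ) : ‖z * q ^ n‖ ≤ ‖z‖ := by
  rw [norm_mul, norm_pow]
  exact mul_le_of_le_one_right (norm_nonneg z) (pow_le_one₀ (norm_nonneg q) hq)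

lemma summable_norm_neg_mul_pow (hq : ‖q‖ < 1) (z : ℂ) :
    Summable fun i : ℕ => ‖-(z * q ^ i)‖ := by
  simpa only [norm_neg, norm_mul, norm_pow] using
    (summable_geometric_of_lt_one (norm_nonneg q) hq).mul_left ‖z‖

lemma hasProd_pochInf (hq : ‖q‖ < 1) (z : ℂ) :
    HasProd (fun i : ℕ => 1 - z * q ^ i) (pochInf z q) := by
  simpa only [pochInf, ← sub_eq_add_neg] using
    (multipliable_one_add_of_summable (summable_norm_neg_mul_pow hq z)).hasProd

lemma pochInf_ne_zero (hq : ‖q‖ < 1) (hz : ‖z‖ < 1) : pochInf z q ≠ 0 := by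
  simpa only [pochInf, ← sub_eq_add_neg] using tprod_one_add_ne_zero_of_summable
    (fun i => by
      rw [← sub_eq_add_neg]
      exact one_sub_ne_zero_of_norm_lt_one ((norm_mul_pow_le hq.le i).trans_lt hz))
    (summable_norm_neg_mul_pow hq z)

lemma qPoch_ne_zero (hq : ‖q‖ < 1) (n : ℕ) : qPoch q n ≠ 0 :=
  prod_ne_zero_iff.2 fun i _ => one_sub_ne_zero_of_norm_lt_one <| by
    rw [norm_pow]; exact pow_lt_one₀ (norm_nonneg q) hq i.succ_ne_zero

lemma tendsto_qPoch (hq : ‖q‖ < 1) : Tendsto (qPoch q) atTop (𝓝 (qPochInf q)) := by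
  simpa only [qPochInf_eq_pochInf, ← qPoch_eq_prod_range] using
    (hasProd_pochInf hq q).tendsto_prod_nat

lemma exists_norm_inv_qPoch_le (hq : ‖q‖ < 1) : ∃ B, ∀ n, ‖(qPoch q n)⁻¹‖ ≤ B := by
  have hlim := ((tendsto_qPoch hq).inv₀ (by
    rw [qPochInf_eq_pochInf]; exact pochInf_ne_zero hq hq)).norm
  obtain ⟨B, hB⟩ := hlim.bddAbove_range
  exact ⟨B, fun n => hB ⟨n, rfl⟩⟩

lemma norm_pow_div_qPoch_pow_le {B r : ℝ} (hB : ∀ n, ‖(qPoch q n)⁻¹‖ ≤ B) {w : ℂ} (hw : ‖w‖ ≤ r)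
    (n k : ℕ) : ‖w ^ n / qPoch q n ^ k‖ ≤ B ^ k * r ^ n := by
  rw [norm_div, norm_pow, norm_pow, div_eq_mul_inv, ← inv_pow, ← norm_inv, mul_comm]
  exact mul_le_mul (pow_le_pow_left₀ (norm_nonneg _) (hB n) k)
    (pow_le_pow_left₀ (norm_nonneg w) hw n) (by positivity)
    (pow_nonneg ((norm_nonneg _).trans (hB 0)) k)

lemma summable_norm_pow_div_qPoch_pow (hq : ‖q‖ < 1) (hz : ‖z‖ < 1) (k : ℕ) :
    Summable fun n : ℕ => ‖z ^ n / qPoch q n ^ k‖ := by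
  obtain ⟨B, hB⟩ := exists_norm_inv_qPoch_le hq
  exact .of_nonneg_of_le (fun _ => norm_nonneg _) (norm_pow_div_qPoch_pow_le hB le_rfl · k)
    ((summable_geometric_of_lt_one (norm_nonneg z) hz).mul_left _)

lemma summable_pow_div_qPoch (hq : ‖q‖ < 1) (hz : ‖z‖ < 1) :
    Summable fun n : ℕ => z ^ n / qPoch q n := by
  simpa using (summable_norm_pow_div_qPoch_pow hq hz 1).of_norm

lemma qExp_zero (q : ℂ) : qExp q 0 = 1 := by
  rw [qExp, tsum_eq_single 0 fun n hn => by simp [hn]]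
  simp [qPoch_zero]

lemma continuousAt_qExp_zero (hq : ‖q‖ < 1) : ContinuousAt (qExp q) 0 := by
  obtain ⟨B, hB⟩ := exists_norm_inv_qPoch_le hq
  have hcont : ContinuousOn (qExp q) (Metric.closedBall 0 (1 / 2)) := by
    refine continuousOn_tsum (fun n => by fun_prop)
      ((summable_geometric_two).mul_left B) fun n w hw => ?_
    simpa using norm_pow_div_qPoch_pow_le hB (mem_closedBall_zero_iff.1 hw) n 1
  exact hcont.continuousAt (Metric.closedBall_mem_nhds 0 (by norm_num))
lemma qExp_sub_qExp_mul (hq : ‖q‖ < 1) (hz : ‖z‖ < 1) :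
    qExp q z - qExp q (z * q) = z * qExp q z := by
  have hzq : ‖z * q‖ < 1 := by simpa using (norm_mul_pow_le hq.le 1).trans_lt hz
  have hsum := (summable_pow_div_qPoch hq hz).sub (summable_pow_div_qPoch hq hzq)
  rw [qExp, qExp, ← (summable_pow_div_qPoch hq hz).tsum_sub (summable_pow_div_qPoch hq hzq),
    hsum.tsum_eq_zero_add, ← tsum_mul_left]
  simp only [pow_zero, sub_self, zero_add]
  refine tsum_congr fun n => ?_
  have hfactor : 1 - q ^ (n + 1) ≠ 0 :=
    right_ne_zero_of_mul (qPoch_succ q n ▸ qPoch_ne_zero hq (n + 1))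
  rw [qPoch_succ, div_sub_div_same, mul_pow, ← mul_one_sub, mul_div_mul_right _ _ hfactor,
    pow_succ', mul_div_assoc]

lemma qExp_mul_prod_range (hq : ‖q‖ < 1) (hz : ‖z‖ < 1) (N : ℕ) :
    qExp q z * ∏ i ∈ range N, (1 - z * q ^ i) = qExp q (z * q ^ N) := by
  induction N with
  | zero => simp
  | succ N ih =>
    have hzN := (norm_mul_pow_le hq.le N).trans_lt hz
    rw [prod_range_succ, ← mul_assoc, ih, pow_succ, ← mul_assoc]
    linear_combination qExp_sub_qExp_mul hq hzN

lemma qExp_mul_pochInf (hq : ‖q‖ < 1) (hz : ‖z‖ < 1) : qExp q z * pochInf z q = 1 := by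
  have hprod := ((hasProd_pochInf hq z).tendsto_prod_nat).const_mul (qExp q z)
  have hshift : Tendsto (fun N : ℕ => qExp q (z * q ^ N)) atTop (𝓝 1) := by
    rw [← qExp_zero q]
    refine (continuousAt_qExp_zero hq).tendsto.comp ?_
    simpa using (tendsto_pow_atTop_nhds_zero_of_norm_lt_one hq).const_mul z
  simp only [qExp_mul_prod_range hq hz] at hprod
  exact tendsto_nhds_unique hprod hshift

lemma qExp_eq_inv_pochInf (hq : ‖q‖ < 1) (hz : ‖z‖ < 1) : qExp q z = (pochInf z q)⁻¹ :=
  eq_inv_of_mul_eq_one_left (qExp_mul_pochInf hq hz)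

lemma qPoch_mul_pochInf_pow_succ (hq : ‖q‖ < 1) (m : ℕ) :
    qPoch q m * pochInf (q ^ (m + 1)) q = qPochInf q := by
  have htail : (fun i => 1 - q * q ^ (i + m)) = fun i => 1 - q ^ (m + 1) * q ^ i := by
    ext i; ring
  rw [qPoch_eq_prod_range, qPochInf_eq_pochInf, pochInf, pochInf,
    ← Multipliable.prod_mul_tprod_nat_mul' (f := fun i => 1 - q * q ^ i) (k := m), htail]
  rw [htail]
  exact (hasProd_pochInf hq _).multipliable

lemma summable_pow_div_qPoch_mul_qPoch_sq (hq : ‖q‖ < 1) :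
    Summable fun n : ℕ × ℕ => q ^ (n.1 + n.2 + n.1 * n.2) / (qPoch q n.1 * qPoch q n.2 ^ 2) := by
  refine .of_norm_bounded ((summable_norm_pow_div_qPoch_pow hq hq 1).mul_norm
    (summable_norm_pow_div_qPoch_pow hq hq 2)) fun n => ?_
  have hsplit : q ^ (n.1 + n.2 + n.1 * n.2) / (qPoch q n.1 * qPoch q n.2 ^ 2)
      = q ^ n.1 / qPoch q n.1 ^ 1 * (q ^ n.2 / qPoch q n.2 ^ 2) * q ^ (n.1 * n.2) := by
    rw [pow_one, pow_add, pow_add]; ring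
  rw [hsplit, norm_mul]
  exact mul_le_of_le_one_right (norm_nonneg _) (by
    rw [norm_pow]; exact pow_le_one₀ (norm_nonneg q) hq.le)

lemma tsum_pow_div_qPoch_mul_qPoch_sq (hq : ‖q‖ < 1) (m : ℕ) :
    ∑' n : ℕ, q ^ (n + m + n * m) / (qPoch q n * qPoch q m ^ 2)
      = q ^ m / qPoch q m / qPochInf q := by
  have hqm : ‖q ^ (m + 1)‖ < 1 := by
    rw [norm_pow]; exact pow_lt_one₀ (norm_nonneg q) hq m.succ_ne_zero
  have hterm : ∀ n : ℕ, q ^ (n + m + n * m) / (qPoch q n * qPoch q m ^ 2)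
      = q ^ m / qPoch q m ^ 2 * ((q ^ (m + 1)) ^ n / qPoch q n) := fun n => by
    rw [← pow_mul, show n + m + n * m = m + (m + 1) * n by ring, pow_add]; ring
  rw [tsum_congr hterm, tsum_mul_left, ← qExp, qExp_eq_inv_pochInf hq hqm,
    ← qPoch_mul_pochInf_pow_succ hq m]
  field_simp [qPoch_ne_zero hq m, pochInf_ne_zero hq hqm]

end

theorem stmt1 (q : ℂ) (hq : ‖q‖ < 1) :
    ∑' n : ℕ × ℕ, q ^ (n.1 + n.2 + n.1 * n.2) / (qPoch q n.1 * qPoch q n.2 ^ 2)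
      = 1 / qPochInf q ^ 2 := by
  have hs := summable_pow_div_qPoch_mul_qPoch_sq hq
  rw [hs.tsum_prod,
    ← hs.tsum_comm (f := fun a b => q ^ (a + b + a * b) / (qPoch q a * qPoch q b ^ 2))]
  simp only [tsum_pow_div_qPoch_mul_qPoch_sq hq]
  rw [tsum_div_const, ← qExp, qExp_eq_inv_pochInf hq hq, ← qPochInf_eq_pochInf]
  ring
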